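/- Let A be a commutative ring, M ∈ Symₙ(A), a ∈ A, v ∈ Aⁿ and b ∈ A. Suppose there exist sums of squares s₁, r ∈ ΣA² with s₁·a = b² + r, and suppose a·v ∈ Σ(M). Then b²·v ∈ Σ(M). -/

import Mathlib

open Matrix

/-- A symmetric matrix is a *sum of squares* if it equals `Qᵀ * Q` for some matrix `Q`. -/
def Matrix.IsSumOfSquares {A : Type*} [CommRing A] {n : ℕ}
    (M : Matrix (Fin n) (Fin n) A) : Prop :=
  ∃ (m : ℕ) (Q : Matrix (Fin m) (Fin n) A), M = Qᵀ * Q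

/-- `Σ(M)`: the set of vectors `v` with `s • M = v vᵀ + N` for some sum of squares
`s ∈ ΣA²` and some sum-of-squares matrix `N`. -/
def SigmaSet {A : Type*} [CommRing A] {n : ℕ} (M : Matrix (Fin n) (Fin n) A) :
    Set (Fin n → A) :=
  {v | ∃ s : A, IsSumSq s ∧ ∃ N : Matrix (Fin n) (Fin n) A,
    N.IsSumOfSquares ∧ s • M = vecMulVec v v + N}

/-!
`Σ(M)` is closed under scalar multiplication (the square of the scalar goes into the
multiplier), so `s₁ a • v = (b² + r) • v ∈ Σ(M)`. Now
`((b² + r) v)((b² + r) v)ᵀ = (b² v)(b² v)ᵀ + (2 b² r + r²) v vᵀ`, and the last term is a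
sum-of-squares matrix, which can be absorbed into `N`.
-/

namespace Matrix

variable {A : Type*} [CommRing A] {n : ℕ}

theorem isSumOfSquares_transpose_mul {ι : Type*} [Fintype ι] (Q : Matrix ι (Fin n) A) :
    (Qᵀ * Q).IsSumOfSquares := by
  let e := Fintype.equivFin ι
  refine ⟨Fintype.card ι, Q.submatrix e.symm id, ?_⟩
  rw [transpose_submatrix, submatrix_mul_equiv _ _ id e.symm id, submatrix_id_id]

theorem IsSumOfSquares.add {N₁ N₂ : Matrix (Fin n) (Fin n) A} (h₁ : N₁.IsSumOfSquares)
    (h₂ : N₂.IsSumOfSquares) : (N₁ + N₂).IsSumOfSquares := by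
  obtain ⟨m₁, Q₁, rfl⟩ := h₁
  obtain ⟨m₂, Q₂, rfl⟩ := h₂
  simpa [transpose_fromRows, fromCols_mul_fromRows] using
    isSumOfSquares_transpose_mul (fromRows Q₁ Q₂)

theorem isSumOfSquares_vecMulVec (v : Fin n → A) : (vecMulVec v v).IsSumOfSquares := by
  simpa [vecMulVec_eq Unit, ← transpose_replicateRow] using
    isSumOfSquares_transpose_mul (replicateRow Unit v)

theorem IsSumOfSquares.smul {c : A} (hc : IsSumSq c) {N : Matrix (Fin n) (Fin n) A}
    (hN : N.IsSumOfSquares) : (c • N).IsSumOfSquares := by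
  induction hc with
  | zero => exact ⟨0, 0, by simp⟩
  | sq_add a _ ih =>
    obtain ⟨m, Q, rfl⟩ := hN
    rw [add_smul]
    refine IsSumOfSquares.add ⟨m, a • Q, ?_⟩ ih
    rw [transpose_smul, Matrix.smul_mul, Matrix.mul_smul, smul_smul]

end Matrix

section SigmaSet

variable {A : Type*} [CommRing A] {n : ℕ} {M : Matrix (Fin n) (Fin n) A}

theorem smul_mem_sigmaSet (c : A) {v : Fin n → A} (hv : v ∈ SigmaSet M) :
    c • v ∈ SigmaSet M := by
  obtain ⟨s, hs, N, hN, hsM⟩ := hv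
  refine ⟨c * c * s, (IsSumSq.mul_self c).mul hs, (c * c) • N,
    hN.smul (IsSumSq.mul_self c), ?_⟩
  rw [mul_smul, hsM, smul_add, smul_vecMulVec, vecMulVec_smul, smul_smul]

theorem mem_sigmaSet_of_vecMulVec_eq_add {v w : Fin n → A} {P : Matrix (Fin n) (Fin n) A}
    (hv : v ∈ SigmaSet M) (hP : P.IsSumOfSquares) (hvw : vecMulVec v v = vecMulVec w w + P) :
    w ∈ SigmaSet M := by
  obtain ⟨s, hs, N, hN, hsM⟩ := hv
  exact ⟨s, hs, P + N, hP.add hN, by rw [hsM, hvw, add_assoc]⟩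

end SigmaSet

theorem sq_smul_mem_sigmaSet_general {A : Type*} [CommRing A] {n : ℕ}
    (M : Matrix (Fin n) (Fin n) A) (a : A) (v : Fin n → A) (b : A)
    (s₁ r : A) (hr : IsSumSq r) (h : s₁ * a = b ^ 2 + r)
    (hav : a • v ∈ SigmaSet M) :
    b ^ 2 • v ∈ SigmaSet M := by
  have hbr : IsSumSq (b * b * r) := (IsSumSq.mul_self b).mul hr
  have hcoeff : IsSumSq (b * b * r + b * b * r + r * r) := (hbr.add hbr).add (hr.mul hr)
  refine mem_sigmaSet_of_vecMulVec_eq_add (smul_mem_sigmaSet s₁ hav)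
    ((isSumOfSquares_vecMulVec v).smul hcoeff) ?_
  simp only [smul_vecMulVec, vecMulVec_smul, smul_smul, ← add_smul]
  congr 1
  linear_combination (s₁ * a + b ^ 2 + r) * h

theorem sq_smul_mem_sigmaSet {A : Type*} [CommRing A] {n : ℕ}
    (M : Matrix (Fin n) (Fin n) A) (a : A) (v : Fin n → A) (b : A)
    (s₁ r : A) (hs₁ : IsSumSq s₁) (hr : IsSumSq r) (h : s₁ * a = b ^ 2 + r)
    (hav : a • v ∈ SigmaSet M) :
    b ^ 2 • v ∈ SigmaSet M :=
  sq_smul_mem_sigmaSet_general M a v b s₁ r hr h hav
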